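/- Suppose for each \tilde{k}, P(s(X)=\tilde{k} | \tilde{Z}=\tilde{k}) / (1 + r(\tilde{k})) ≥ 1−ε where r(\tilde{k}) = (P(s(X)=\tilde{k}) − P(\tilde{Z}=\tilde{k}))/P(\tilde{Z}=\tilde{k}), and suppose max_{k} P(Z=k | \tilde{Z}=\tilde{k}) = P(Z=\tilde{k} | \tilde{Z}=\tilde{k}) ≥ 1−δ for each \tilde{k}. Then γ_0 := min_{\tilde{k}} P(Z=\tilde{k} | s(X)=\tilde{k}) ≥ (1−ε)(1−δ). -/

import Mathlib

open MeasureTheory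

/-- Conditional probability `P(A | B)` as a real number. -/
noncomputable def condP {Ω : Type*} [MeasurableSpace Ω] (μ : Measure Ω) (A B : Set Ω) : ℝ :=
  (μ (A ∩ B)).toReal / (μ B).toReal

/-- Lemma 1: Suppose for each `k̃`,
`P(s(X)=k̃ | Z̃=k̃) / (1 + r(k̃)) ≥ 1−ε` where
`r(k̃) = (P(s(X)=k̃) − P(Z̃=k̃))/P(Z̃=k̃)`, and suppose
`max_k P(Z=k | Z̃=k̃) = P(Z=k̃ | Z̃=k̃) ≥ 1−δ` for each `k̃`. Then
`γ₀ := min_{k̃} P(Z=k̃ | s(X)=k̃) ≥ (1−ε)(1−δ)`. -/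
theorem stmt_3 {Ω 𝓧 : Type*} [MeasurableSpace Ω] [MeasurableSpace 𝓧]
    (μ : Measure Ω) [IsProbabilityMeasure μ]
    (K : ℕ) [NeZero K] (X : Ω → 𝓧) (Z Ztil : Ω → Fin K)
    (s : 𝓧 → Fin K) (hs : Measurable s) (hX : Measurable X)
    (ε δ : ℝ) (hε : 0 ≤ ε) (hε1 : ε < 1) (hδ : 0 ≤ δ) (hδ1 : δ < 1)
    -- conditional independence X ⫫ Z | Z̃ :
    (hCI : ∀ (B : Set 𝓧), MeasurableSet B → ∀ (k ktil : Fin K),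
      condP μ ({ω | X ω ∈ B} ∩ {ω | Z ω = k}) {ω | Ztil ω = ktil} =
        condP μ {ω | X ω ∈ B} {ω | Ztil ω = ktil} * condP μ {ω | Z ω = k} {ω | Ztil ω = ktil})
    -- all conditioning events have positive probability:
    (hzt : ∀ ktil : Fin K, 0 < μ {ω | Ztil ω = ktil})
    (hsx : ∀ ktil : Fin K, 0 < μ {ω | s (X ω) = ktil})
    -- Assumption 4 (accuracy of the Bayes rule relative to marginal discrepancy):
    (hacc : ∀ ktil : Fin K,
      condP μ {ω | s (X ω) = ktil} {ω | Ztil ω = ktil} /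
          (1 + ((μ {ω | s (X ω) = ktil}).toReal - (μ {ω | Ztil ω = ktil}).toReal) /
                (μ {ω | Ztil ω = ktil}).toReal) ≥ 1 - ε)
    -- Assumption 5 (contiguity / low corruption):
    (hmax : ∀ ktil k : Fin K,
      condP μ {ω | Z ω = k} {ω | Ztil ω = ktil} ≤ condP μ {ω | Z ω = ktil} {ω | Ztil ω = ktil})
    (hdiag : ∀ ktil : Fin K, condP μ {ω | Z ω = ktil} {ω | Ztil ω = ktil} ≥ 1 - δ) :
    (⨅ ktil : Fin K, condP μ {ω | Z ω = ktil} {ω | s (X ω) = ktil}) ≥ (1 - ε) * (1 - δ) := by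

  have hK : Nonempty (Fin K) := Fin.pos_iff_nonempty.mp (Nat.pos_of_ne_zero (NeZero.ne K))
  apply le_ciInf
  intro k
  set a := (μ {ω | s (X ω) = k}).toReal with ha
  set b := (μ {ω | Ztil ω = k}).toReal with hb
  have hbpos : 0 < b := ENNReal.toReal_pos (hzt k).ne' (measure_ne_top μ _)
  have hapos : 0 < a := ENNReal.toReal_pos (hsx k).ne' (measure_ne_top μ _)
  set m := (μ ({ω | s (X ω) = k} ∩ {ω | Ztil ω = k})).toReal with hm
  set c := (μ ({ω | Z ω = k} ∩ {ω | Ztil ω = k})).toReal with hc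
  have hmnn : 0 ≤ m := ENNReal.toReal_nonneg
  have hacc' : 1 - ε ≤ m / a := by
    have h := hacc k
    rw [condP] at h
    have he : (1:ℝ) + (a - b)/b = a / b := by field_simp; ring
    rw [he] at h
    calc 1 - ε ≤ (m / b) / (a / b) := h
      _ = m / a := by field_simp
  have hdiag' : 1 - δ ≤ c / b := hdiag k
  have hCI' := hCI (s ⁻¹' {k}) (hs (measurableSet_singleton k)) k k
  have hset : {ω | X ω ∈ s ⁻¹' {k}} = {ω | s (X ω) = k} := rfl
  rw [hset, condP, condP, condP] at hCI'
  set t := (μ (({ω | s (X ω) = k} ∩ {ω | Z ω = k}) ∩ {ω | Ztil ω = k})).toReal with ht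
  have htnn : 0 ≤ t := ENNReal.toReal_nonneg
  -- hCI' : t / b = (m / b) * (c / b)
  have ht' : t = m * (c / b) := by
    have := hCI'
    field_simp at this
    have hb0 : b ≠ 0 := hbpos.ne'
    field_simp
    have e : t / b = m / b * (c / b) := hCI'
    rw [div_mul_div_comm, div_eq_div_iff hb0 (mul_ne_zero hb0 hb0)] at e
    have e2 := mul_right_cancel₀ hb0 (show (t * b) * b = (m * c) * b by linarith [e])
    linarith [e2]
  have hmono : t ≤ (μ ({ω | Z ω = k} ∩ {ω | s (X ω) = k})).toReal := by
    apply ENNReal.toReal_mono (measure_ne_top μ _)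
    apply measure_mono
    intro ω hω
    exact ⟨hω.1.2, hω.1.1⟩
  have hstep : (1 - ε) * (1 - δ) ≤ t / a := by
    have h1 : (1 - ε) * (1 - δ) ≤ (m / a) * (c / b) := by
      apply mul_le_mul hacc' hdiag' (by linarith) (by positivity)
    calc (1 - ε) * (1 - δ) ≤ (m / a) * (c / b) := h1
      _ = t / a := by rw [ht']; ring
  rw [condP]
  calc (1 - ε) * (1 - δ) ≤ t / a := hstep
    _ ≤ (μ ({ω | Z ω = k} ∩ {ω | s (X ω) = k})).toReal / a :=
        by gcongr
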